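/- Let d be a positive integer, m = 2d+1, and n ≥ 4πd. Let A be the m×n real matrix with rows indexed 0,…,m−1 and columns indexed 0,…,n−1 given by A_{ij} = p_i(2πj/n), where p_0(φ) ≡ 1, p_{2i−1}(φ) = cos(iφ), p_{2i}(φ) = sin(iφ) for 1 ≤ i ≤ d. Take P_+ = {0,…,n−1} (all column indices) and P_n = ∅. If A satisfies VSG_s(ξ,θ,ρ,σ) for some ξ < 1, θ ≥ 1 and ρ, σ ≥ 0, then s ≤ 2. -/

import Mathlib

/-!
Suppose `s ≥ 3` and put `E = 1 - Yᵀ A`. Adding the two certificate inequalities for column `i`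
gives `Φ_s(C_i) + Φ_s(-C_i) ≤ (1 + θ) ξ`. Let `F` be the Fejér kernel of length `r ≈ n / 3` on
`ℤ / n` and `κ(u) = F(u) cos(2π L u / n)` its modulation to the frequency `L = d + r`. The
spectrum of `κ` lies in `d < |k| < n - d`, so the circulant matrix `K = (κ(i - j))` satisfies
`A K = 0`, whence `tr (K E) = tr K = n`. On the other hand `|κ| ≤ 1` and the positive and the
negative part of every row of `K` have mass at most `n / r ≤ 3 ≤ s`; since the dual of the
top-`s` norm is `max(‖·‖_∞, ‖·‖_1 / s)`, this gives `(1 + θ ξ) (K E)_{ii} ≤ (1 + θ) ξ`.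
Summing over `i` yields `1 + θ ξ ≤ (1 + θ) ξ`, that is `ξ ≥ 1`.
-/

open Finset

noncomputable def normS1 {n : ℕ} (s : ℕ) (x : Fin n → ℝ) : ℝ :=
  (Finset.univ.powerset.filter (fun J : Finset (Fin n) => J.card ≤ s)).sup'
    ⟨∅, by simp⟩ (fun J => ∑ i ∈ J, |x i|)

noncomputable def dualNorm {m : ℕ} (N : (Fin m → ℝ) → ℝ) (v : Fin m → ℝ) : ℝ :=
  sSup {r : ℝ | ∃ x : Fin m → ℝ, N x ≤ 1 ∧ r = ∑ k, v k * x k}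

def IsNorm {m : ℕ} (N : (Fin m → ℝ) → ℝ) : Prop :=
  (∀ x y, N (x + y) ≤ N x + N y) ∧ (∀ (c : ℝ) (x), N (c • x) = |c| * N x) ∧
  (∀ x, N x = 0 → x = 0)

def SemiGood {m n : ℕ} (A : Matrix (Fin m) (Fin n) ℝ) (Pplus : Finset (Fin n)) (s : ℕ) : Prop :=
  ∀ w : Fin n → ℝ,
    (Finset.univ.filter (fun i => w i ≠ 0)).card ≤ s →
    (∀ i ∈ Pplus, 0 ≤ w i) →
    ∀ z : Fin n → ℝ, A.mulVec z = A.mulVec w → (∀ i ∈ Pplus, 0 ≤ z i) →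
      (∑ i, |z i|) ≤ (∑ i, |w i|) → z = w

def SGCond {m n : ℕ} (A : Matrix (Fin m) (Fin n) ℝ) (Pplus : Finset (Fin n))
    (s : ℕ) (ξ θ : ℝ) : Prop :=
  ∀ x : Fin n → ℝ, A.mulVec x = 0 → ∀ J : Finset (Fin n), J.card ≤ s →
    ∑ i ∈ J ∩ Pplus, x i + ∑ i ∈ J ∩ Pplusᶜ, |x i| ≤
      ξ * (∑ i ∈ Pplusᶜ \ J, |x i| + ∑ i ∈ Pplus \ J, max (-x i) (θ * x i))

def SGbCond {m n : ℕ} (A : Matrix (Fin m) (Fin n) ℝ) (Pplus : Finset (Fin n))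
    (s : ℕ) (ξ θ β : ℝ) (N : (Fin m → ℝ) → ℝ) : Prop :=
  ∀ x : Fin n → ℝ, ∀ J : Finset (Fin n), J.card ≤ s →
    ∑ i ∈ J ∩ Pplus, x i + ∑ i ∈ J ∩ Pplusᶜ, |x i| ≤
      β * N (A.mulVec x) +
        ξ * (∑ i ∈ Pplusᶜ \ J, |x i| + ∑ i ∈ Pplus \ J, max (-x i) (θ * x i))

def SGbCondSign {m n : ℕ} (A : Matrix (Fin m) (Fin n) ℝ) (Pplus : Finset (Fin n))
    (s : ℕ) (ξ β : ℝ) (N : (Fin m → ℝ) → ℝ) : Prop :=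
  ∀ J : Finset (Fin n), J.card ≤ s →
    ∀ x : Fin n → ℝ, (∀ i ∈ Pplus \ J, x i ≤ 0) →
      ∑ i ∈ J ∩ Pplus, x i + ∑ i ∈ J ∩ Pplusᶜ, |x i| ≤
        β * N (A.mulVec x) + ξ * ∑ i ∈ Jᶜ, |x i|

noncomputable def Phi {n : ℕ} (Pplus : Finset (Fin n)) (s : ℕ) (ξ θ : ℝ)
    (x : Fin n → ℝ) : ℝ :=
  normS1 s (fun i => if i ∈ Pplus then (1 + θ * ξ) * max (x i) 0 else (1 + ξ) * |x i|)

def VSGCert {m n : ℕ} (A : Matrix (Fin m) (Fin n) ℝ) (Pplus : Finset (Fin n))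
    (s : ℕ) (ξ θ ρ σ : ℝ) (N : (Fin m → ℝ) → ℝ)
    (Y : Matrix (Fin m) (Fin n) ℝ) (v : Fin m → ℝ) : Prop :=
  (∀ i, Phi Pplus s ξ θ (fun j => -((1 - Y.transpose * A : Matrix (Fin n) (Fin n) ℝ) j i)) + (A.transpose.mulVec v) i ≤ ξ) ∧
  (∀ i ∉ Pplus, Phi Pplus s ξ θ (fun j => (1 - Y.transpose * A : Matrix (Fin n) (Fin n) ℝ) j i) - (A.transpose.mulVec v) i ≤ ξ) ∧
  (∀ i ∈ Pplus, Phi Pplus s ξ θ (fun j => (1 - Y.transpose * A : Matrix (Fin n) (Fin n) ℝ) j i) - (A.transpose.mulVec v) i ≤ θ * ξ) ∧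
  (∀ i, dualNorm N (fun k => Y k i) ≤ σ) ∧
  dualNorm N v ≤ ρ

def VSG {m n : ℕ} (A : Matrix (Fin m) (Fin n) ℝ) (Pplus : Finset (Fin n))
    (s : ℕ) (ξ θ ρ σ : ℝ) (N : (Fin m → ℝ) → ℝ) : Prop :=
  ∃ (Y : Matrix (Fin m) (Fin n) ℝ) (v : Fin m → ℝ), VSGCert A Pplus s ξ θ ρ σ N Y v

def VSGbarCert {m n : ℕ} (A : Matrix (Fin m) (Fin n) ℝ) (Pplus : Finset (Fin n))
    (s : ℕ) (ξ σ θ : ℝ) (N : (Fin m → ℝ) → ℝ) (Y : Matrix (Fin m) (Fin n) ℝ) : Prop :=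
  (∀ i, dualNorm N (fun k => Y k i) ≤ σ) ∧
  (∀ i ∉ Pplus, ∀ j, |(1 - Y.transpose * A : Matrix (Fin n) (Fin n) ℝ) i j| ≤ ξ / ((1 + ξ) * s)) ∧
  (∀ i ∈ Pplus, ∀ j ∉ Pplus,
    -(ξ / ((1 + ξ * θ) * s)) ≤ (1 - Y.transpose * A : Matrix (Fin n) (Fin n) ℝ) i j ∧
      (1 - Y.transpose * A : Matrix (Fin n) (Fin n) ℝ) i j ≤ ξ / ((1 + ξ * θ) * s)) ∧
  (∀ i ∈ Pplus, ∀ j ∈ Pplus,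
    -(ξ / ((1 + ξ * θ) * s)) ≤ (1 - Y.transpose * A : Matrix (Fin n) (Fin n) ℝ) i j ∧
      (1 - Y.transpose * A : Matrix (Fin n) (Fin n) ℝ) i j ≤ ξ * θ / ((1 + ξ * θ) * s))

open Complex ComplexConjugate

lemma mul_le_max_mul_max_add (a b : ℝ) :
    a * b ≤ max a 0 * max b 0 + max (-a) 0 * max (-b) 0 := by
  rcases le_total 0 a with ha | ha <;> rcases le_total 0 b with hb | hb <;>
    simp [ha, hb] <;> nlinarith

lemma exists_subset_card_le_sum_mul_le {ι : Type*} [DecidableEq ι] (c : ℕ) :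
    ∀ (S : Finset ι) (v w : ι → ℝ), (∀ i ∈ S, 0 ≤ v i) → (∀ i ∈ S, 0 ≤ w i) →
      (∀ i ∈ S, w i ≤ 1) → ∑ i ∈ S, w i ≤ c →
        ∃ J ⊆ S, J.card ≤ c ∧ ∑ i ∈ S, w i * v i ≤ ∑ i ∈ J, v i := by
  induction c with
  | zero =>
    intro S v w _ hw0 _ hsum
    have hw : ∀ i ∈ S, w i = 0 :=
      (Finset.sum_eq_zero_iff_of_nonneg hw0).1 (le_antisymm (by simpa using hsum)
        (Finset.sum_nonneg hw0))
    refine ⟨∅, by simp, by simp, ?_⟩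
    rw [Finset.sum_eq_zero fun i hi => by rw [hw i hi, zero_mul], Finset.sum_empty]
  | succ c ih =>
    intro S v w hv hw0 hw1 hsum
    rcases S.eq_empty_or_nonempty with rfl | hS
    · exact ⟨∅, by simp, by simp, by simp⟩
    -- Put the largest entry of `v` into `J` and rescale the other weights to the budget `c`.
    obtain ⟨i₀, hi₀, hmax⟩ := S.exists_max_image v hS
    set S' := S.erase i₀
    have hS' : S' ⊆ S := Finset.erase_subset _ _
    set T := ∑ j ∈ S', w j
    have hT : 0 ≤ T := Finset.sum_nonneg fun j hj => hw0 j (hS' hj)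
    have hTw : T + w i₀ ≤ c + 1 := by
      rw [Finset.sum_erase_add S w hi₀]; exact_mod_cast hsum
    set μ := min T c / T
    have hμ0 : 0 ≤ μ := by positivity
    have hμ1 : μ ≤ 1 := div_le_one_of_le₀ (min_le_left _ _) hT
    have hμT : μ * T = min T c := by
      rcases hT.eq_or_lt with hT0 | hT0
      · simp [μ, ← hT0]
      · exact div_mul_cancel₀ _ hT0.ne'
    obtain ⟨J', hJ'S', hJ'c, hJ'⟩ := ih S' v (fun j => μ * w j)
      (fun j hj => hv j (hS' hj)) (fun j hj => mul_nonneg hμ0 (hw0 j (hS' hj)))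
      (fun j hj => mul_le_one₀ hμ1 (hw0 j (hS' hj)) (hw1 j (hS' hj)))
      (by rw [← Finset.mul_sum, hμT]; exact min_le_right _ _)
    have hi₀J' : i₀ ∉ J' := fun h => (Finset.mem_erase.1 (hJ'S' h)).1 rfl
    refine ⟨insert i₀ J', Finset.insert_subset hi₀ (hJ'S'.trans hS'),
      (Finset.card_insert_le _ _).trans (by omega), ?_⟩
    have hrest : ∑ j ∈ S', (1 - μ) * w j * v j ≤ (1 - μ) * T * v i₀ := by
      rw [Finset.mul_sum, Finset.sum_mul]
      exact Finset.sum_le_sum fun j hj => mul_le_mul_of_nonneg_left (hmax j (hS' hj))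
        (mul_nonneg (by linarith) (hw0 j (hS' hj)))
    have hsplit : ∑ j ∈ S', w j * v j =
        ∑ j ∈ S', μ * w j * v j + ∑ j ∈ S', (1 - μ) * w j * v j := by
      rw [← Finset.sum_add_distrib]; exact Finset.sum_congr rfl fun j _ => by ring
    have hcoef : w i₀ + (1 - μ) * T ≤ 1 := by
      rw [sub_mul, one_mul, hμT]
      rcases le_total T c with h | h
      · rw [min_eq_left h]; linarith [hw1 i₀ hi₀]
      · rw [min_eq_right h]; linarith
    rw [← Finset.sum_erase_add S _ hi₀, Finset.sum_insert hi₀J', hsplit]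
    nlinarith [hv i₀ hi₀]

section Phi

variable {n : ℕ}

lemma sum_abs_le_normS1 (s : ℕ) (x : Fin n → ℝ) {J : Finset (Fin n)} (hJ : J.card ≤ s) :
    ∑ i ∈ J, |x i| ≤ normS1 s x :=
  Finset.le_sup' (fun J => ∑ i ∈ J, |x i|) (by simpa using hJ)

lemma sum_mul_le_normS1 {s : ℕ} {v w : Fin n → ℝ} (hv : ∀ i, 0 ≤ v i) (hw0 : ∀ i, 0 ≤ w i)
    (hw1 : ∀ i, w i ≤ 1) (hsum : ∑ i, w i ≤ s) : ∑ i, w i * v i ≤ normS1 s v := by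
  obtain ⟨J, -, hJs, hJ⟩ := exists_subset_card_le_sum_mul_le s Finset.univ v w
    (fun i _ => hv i) (fun i _ => hw0 i) (fun i _ => hw1 i) hsum
  calc ∑ i, w i * v i ≤ ∑ i ∈ J, v i := hJ
    _ = ∑ i ∈ J, |v i| := Finset.sum_congr rfl fun i _ => (abs_of_nonneg (hv i)).symm
    _ ≤ normS1 s v := sum_abs_le_normS1 s v hJs

lemma Phi_nonneg (P : Finset (Fin n)) (s : ℕ) (ξ θ : ℝ) (x : Fin n → ℝ) :
    0 ≤ Phi P s ξ θ x := by
  simpa [Phi] using sum_abs_le_normS1 s (J := ∅) _ (by simp)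

lemma Phi_univ (s : ℕ) (ξ θ : ℝ) (x : Fin n → ℝ) :
    Phi Finset.univ s ξ θ x = normS1 s (fun i => (1 + θ * ξ) * max (x i) 0) := by
  simp [Phi]

lemma mul_sum_mul_le_Phi_add_Phi {s : ℕ} {ξ θ : ℝ} (hξθ : 0 ≤ 1 + θ * ξ) {w : Fin n → ℝ}
    (hw : ∀ j, |w j| ≤ 1) (hpos : ∑ j, max (w j) 0 ≤ s) (hneg : ∑ j, max (-w j) 0 ≤ s)
    (c : Fin n → ℝ) :
    (1 + θ * ξ) * ∑ j, w j * c j ≤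
      Phi Finset.univ s ξ θ c + Phi Finset.univ s ξ θ (fun j => -c j) := by
  have hw1 : ∀ j, max (w j) 0 ≤ 1 := fun j => max_le (le_of_abs_le (hw j)) zero_le_one
  have hw1' : ∀ j, max (-w j) 0 ≤ 1 := fun j =>
    max_le (neg_le.mp (abs_le.mp (hw j)).1) zero_le_one
  have hpoint : ∀ j, (1 + θ * ξ) * (w j * c j) ≤
      max (w j) 0 * ((1 + θ * ξ) * max (c j) 0) +
        max (-w j) 0 * ((1 + θ * ξ) * max (-c j) 0) := by
    intro j
    nlinarith [mul_le_mul_of_nonneg_left (mul_le_max_mul_max_add (w j) (c j)) hξθ]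
  rw [Phi_univ, Phi_univ, Finset.mul_sum]
  refine (Finset.sum_le_sum fun j _ => hpoint j).trans ?_
  rw [Finset.sum_add_distrib]
  exact add_le_add
    (sum_mul_le_normS1 (fun j => by positivity) (fun j => le_max_right _ _) hw1 hpos)
    (sum_mul_le_normS1 (fun j => by positivity) (fun j => le_max_right _ _) hw1' hneg)

end Phi

noncomputable def primRoot (n : ℕ) : ℂ := exp (2 * Real.pi * I / n)

section PrimRoot

variable {n : ℕ}

lemma primRoot_zpow (m : ℤ) : primRoot n ^ m = exp ((2 * Real.pi * m / n : ℝ) * I) := by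
  rw [primRoot, ← exp_int_mul]
  push_cast
  ring_nf

lemma re_primRoot_zpow (m : ℤ) : (primRoot n ^ m).re = Real.cos (2 * Real.pi * m / n) := by
  rw [primRoot_zpow, exp_ofReal_mul_I_re]

lemma im_primRoot_zpow (m : ℤ) : (primRoot n ^ m).im = Real.sin (2 * Real.pi * m / n) := by
  rw [primRoot_zpow, exp_ofReal_mul_I_im]

lemma norm_primRoot_zpow (m : ℤ) : ‖primRoot n ^ m‖ = 1 := by
  rw [primRoot_zpow, norm_exp_ofReal_mul_I]

lemma conj_primRoot_zpow (m : ℤ) : conj (primRoot n ^ m) = primRoot n ^ (-m) := by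
  rw [primRoot_zpow, primRoot_zpow, ← exp_conj, map_mul, conj_ofReal, conj_I]
  push_cast
  ring_nf

lemma primRoot_zpow_add (a b : ℤ) : primRoot n ^ (a + b) = primRoot n ^ a * primRoot n ^ b :=
  zpow_add₀ (exp_ne_zero _) a b

lemma sum_primRoot_zpow_eq_zero {m : ℤ} (hm : m ≠ 0) (hmn : |m| < n) (b : ℤ) :
    ∑ x : Fin n, primRoot n ^ (m * x + b) = 0 := by
  have hζ := Complex.isPrimitiveRoot_exp n (by have := abs_nonneg m; omega)
  have hne : primRoot n ^ m ≠ 1 := fun h =>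
    hm (Int.eq_zero_of_abs_lt_dvd ((hζ.zpow_eq_one_iff_dvd m).1 h) hmn)
  have hpow : (primRoot n ^ m) ^ n = 1 := by
    rw [← zpow_natCast, ← zpow_mul, mul_comm, zpow_mul]
    simp [primRoot, hζ.pow_eq_one]
  simp only [primRoot_zpow_add, ← Finset.sum_mul, zpow_mul, zpow_natCast]
  rw [Fin.sum_univ_eq_sum_range (fun x => (primRoot n ^ m) ^ x), geom_sum_eq hne, hpow]
  simp

end PrimRoot

noncomputable def dirichletSum (n r : ℕ) (u : ℤ) : ℂ :=
  ∑ t ∈ Finset.range r, primRoot n ^ ((t : ℤ) * u)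

noncomputable def fejer (n r : ℕ) (u : ℤ) : ℝ := normSq (dirichletSum n r u) / r ^ 2

noncomputable def modulatedFejer (n r L : ℕ) (u : ℤ) : ℝ :=
  fejer n r u * Real.cos (2 * Real.pi * L * u / n)

section Fejer

variable {n r L : ℕ}

lemma normSq_dirichletSum (u : ℤ) :
    (normSq (dirichletSum n r u) : ℂ) =
      ∑ t ∈ Finset.range r, ∑ t' ∈ Finset.range r, primRoot n ^ (((t : ℤ) - t') * u) := by
  rw [← mul_conj, dirichletSum, map_sum, Finset.sum_mul_sum]
  refine Finset.sum_congr rfl fun t _ => Finset.sum_congr rfl fun t' _ => ?_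
  rw [conj_primRoot_zpow, ← primRoot_zpow_add]
  ring_nf

lemma fejer_neg (u : ℤ) : fejer n r (-u) = fejer n r u := by
  have : dirichletSum n r (-u) = conj (dirichletSum n r u) := by
    simp only [dirichletSum, map_sum, conj_primRoot_zpow, mul_neg]
  rw [fejer, fejer, this, normSq_conj]

lemma fejer_nonneg (u : ℤ) : 0 ≤ fejer n r u := by
  exact div_nonneg (normSq_nonneg _) (by positivity)

lemma fejer_le_one (u : ℤ) : fejer n r u ≤ 1 := by
  have hD : ‖dirichletSum n r u‖ ≤ r := by
    refine (norm_sum_le _ _).trans_eq ?_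
    simp only [norm_primRoot_zpow, Finset.sum_const, Finset.card_range, nsmul_eq_mul, mul_one]
  rw [fejer, normSq_eq_norm_sq]
  rcases Nat.eq_zero_or_pos r with rfl | hr
  · simp
  rw [div_le_one (by positivity)]
  gcongr

lemma sum_normSq_dirichletSum_sub (hrn : r ≤ n) (c : ℤ) :
    ∑ x : Fin n, normSq (dirichletSum n r (x - c)) = n * r := by
  have hdiag : ∀ t ∈ Finset.range r, ∀ t' ∈ Finset.range r,
      ∑ x : Fin n, primRoot n ^ (((t : ℤ) - t') * (x - c)) = if t = t' then (n : ℂ) else 0 := by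
    intro t ht t' ht'
    split_ifs with h
    · simp [h]
    · simp only [Finset.mem_range] at ht ht'
      rw [← sum_primRoot_zpow_eq_zero (n := n) (m := t - t') (by omega) (by rw [abs_lt]; omega)
        (-((t - t') * c))]
      congr! 2
      ring
  apply Complex.ofReal_injective
  push_cast
  simp only [normSq_dirichletSum]
  rw [Finset.sum_comm]
  simp_rw [Finset.sum_comm (s := Finset.univ)]
  rw [Finset.sum_congr rfl fun t ht => Finset.sum_congr rfl fun t' ht' => hdiag t ht t' ht']
  simp only [Finset.sum_ite_eq]
  rw [Finset.sum_congr rfl fun t ht => if_pos ht]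
  simp [mul_comm]

lemma sum_fejer_sub (hrn : r ≤ n) (c : ℤ) :
    ∑ x : Fin n, fejer n r (x - c) = n / r := by
  simp only [fejer]
  rw [← Finset.sum_div, sum_normSq_dirichletSum_sub hrn c]
  rcases Nat.eq_zero_or_pos r with rfl | hr
  · simp
  field_simp

lemma modulatedFejer_zero (hr : r ≠ 0) : modulatedFejer n r L 0 = 1 := by
  simp only [modulatedFejer, fejer, dirichletSum]
  field_simp
  simp [sq]

lemma modulatedFejer_neg (u : ℤ) : modulatedFejer n r L (-u) = modulatedFejer n r L u := by
  rw [modulatedFejer, modulatedFejer, fejer_neg, ← Real.cos_neg]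
  push_cast
  ring_nf

lemma abs_modulatedFejer_le (u : ℤ) : |modulatedFejer n r L u| ≤ fejer n r u := by
  rw [modulatedFejer, abs_mul, abs_of_nonneg (fejer_nonneg u)]
  exact mul_le_of_le_one_right (fejer_nonneg u) (Real.abs_cos_le_one _)

end Fejer

section Orthogonality

variable {n r L : ℕ}

lemma modulatedFejer_mul_eq (u : ℤ) :
    (modulatedFejer n r L u : ℂ) * (2 * r ^ 2) =
      ∑ t ∈ Finset.range r, ∑ t' ∈ Finset.range r,
        (primRoot n ^ (((t : ℤ) - t' + L) * u) + primRoot n ^ (((t : ℤ) - t' - L) * u)) := by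
  have hcos : (2 * Real.cos (2 * Real.pi * L * u / n) : ℂ) =
      primRoot n ^ ((L : ℤ) * u) + primRoot n ^ (-((L : ℤ) * u)) := by
    rw [primRoot_zpow, primRoot_zpow]
    push_cast
    rw [two_cos]
    ring_nf
  have hscale : (modulatedFejer n r L u : ℂ) * (2 * r ^ 2) =
      normSq (dirichletSum n r u) * (2 * Real.cos (2 * Real.pi * L * u / n) : ℂ) := by
    rcases Nat.eq_zero_or_pos r with rfl | hr
    · simp [dirichletSum]
    have : (r : ℂ) ≠ 0 := by exact_mod_cast hr.ne'
    simp only [modulatedFejer, fejer]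
    push_cast
    field_simp
  rw [hscale, hcos, normSq_dirichletSum, Finset.sum_mul]
  refine Finset.sum_congr rfl fun t _ => ?_
  rw [Finset.sum_mul]
  refine Finset.sum_congr rfl fun t' _ => ?_
  rw [mul_add, ← primRoot_zpow_add, ← primRoot_zpow_add]
  ring_nf

lemma sum_modulatedFejer_sub_mul_primRoot_zpow {q : ℤ} (hlow : |q| + r ≤ L)
    (hhigh : L + r + |q| ≤ n) (c : ℤ) :
    ∑ x : Fin n, (modulatedFejer n r L (x - c) : ℂ) * primRoot n ^ (q * x) = 0 := by
  rcases Nat.eq_zero_or_pos r with rfl | hr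
  · simp [modulatedFejer, fejer, dirichletSum]
  have hq := abs_le.mp (le_refl |q|)
  have hvanish : ∀ t ∈ Finset.range r, ∀ t' ∈ Finset.range r, ∀ a : ℤ,
      (a = t - t' + L ∨ a = t - t' - L) →
        ∑ x : Fin n, primRoot n ^ (a * (x - c)) * primRoot n ^ (q * x) = 0 := by
    intro t ht t' ht' a ha
    simp only [Finset.mem_range] at ht ht'
    rw [← sum_primRoot_zpow_eq_zero (n := n) (m := a + q) (by omega) (by rw [abs_lt]; omega)
      (-(a * c))]
    refine Finset.sum_congr rfl fun x _ => ?_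
    rw [← primRoot_zpow_add]
    ring_nf
  have hexpand : ∀ x : Fin n,
      (modulatedFejer n r L (x - c) : ℂ) * primRoot n ^ (q * x) * (2 * r ^ 2) =
        ∑ t ∈ Finset.range r, ∑ t' ∈ Finset.range r,
          (primRoot n ^ (((t : ℤ) - t' + L) * (x - c)) * primRoot n ^ (q * x) +
            primRoot n ^ (((t : ℤ) - t' - L) * (x - c)) * primRoot n ^ (q * x)) := by
    intro x
    rw [mul_right_comm, modulatedFejer_mul_eq, Finset.sum_mul]
    simp only [Finset.sum_mul, add_mul]
  have hr2 : (2 * (r : ℂ) ^ 2) ≠ 0 := by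
    have : (r : ℂ) ≠ 0 := by exact_mod_cast hr.ne'
    exact mul_ne_zero two_ne_zero (pow_ne_zero 2 this)
  refine (mul_eq_zero.mp ?_).resolve_right hr2
  rw [Finset.sum_mul, Finset.sum_congr rfl fun x _ => hexpand x, Finset.sum_comm]
  refine Finset.sum_eq_zero fun t ht => ?_
  rw [Finset.sum_comm]
  refine Finset.sum_eq_zero fun t' ht' => ?_
  rw [Finset.sum_add_distrib, hvanish t ht t' ht' _ (.inl rfl), hvanish t ht t' ht' _ (.inr rfl),
    add_zero]

lemma sum_modulatedFejer_sub_mul_re_im {q : ℤ} (hlow : |q| + r ≤ L)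
    (hhigh : L + r + |q| ≤ n) (c : ℤ) :
    ∑ x : Fin n, modulatedFejer n r L (x - c) * (primRoot n ^ (q * x)).re = 0 ∧
      ∑ x : Fin n, modulatedFejer n r L (x - c) * (primRoot n ^ (q * x)).im = 0 := by
  have h := sum_modulatedFejer_sub_mul_primRoot_zpow hlow hhigh c
  exact ⟨by simpa using congrArg re h, by simpa using congrArg im h⟩

end Orthogonality

noncomputable def fejerMatrix (n r L : ℕ) : Matrix (Fin n) (Fin n) ℝ :=
  Matrix.of fun i j => modulatedFejer n r L ((i : ℕ) - (j : ℕ))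

section FejerMatrix

variable {n r L : ℕ}

lemma trace_fejerMatrix (hr : r ≠ 0) : (fejerMatrix n r L).trace = n := by
  simp [Matrix.trace, fejerMatrix, modulatedFejer_zero hr]

lemma abs_fejerMatrix_le_one (i j : Fin n) : |fejerMatrix n r L i j| ≤ 1 :=
  (abs_modulatedFejer_le _).trans (fejer_le_one _)

lemma sum_max_fejerMatrix_le (hrn : r ≤ n) (i : Fin n) :
    ∑ j, max (fejerMatrix n r L i j) 0 ≤ n / r := by
  rw [← sum_fejer_sub hrn (i : ℕ)]
  refine Finset.sum_le_sum fun j _ => ?_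
  rw [← neg_sub, fejer_neg]
  exact max_le ((le_abs_self _).trans (abs_modulatedFejer_le _)) (fejer_nonneg _)

lemma sum_fejerMatrix_eq_zero (hlow : r ≤ L) (hhigh : L + r ≤ n) (i : Fin n) :
    ∑ j, fejerMatrix n r L i j = 0 := by
  have h := (sum_modulatedFejer_sub_mul_re_im (n := n) (q := 0) (by simpa using hlow)
    (by simp only [abs_zero, add_zero]; exact_mod_cast hhigh) (i : ℕ)).1
  simp only [zero_mul, zpow_zero, one_re, mul_one] at h
  rw [← h]
  refine Finset.sum_congr rfl fun j _ => ?_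
  rw [fejerMatrix, Matrix.of_apply, ← modulatedFejer_neg, neg_sub]

lemma sum_max_neg_fejerMatrix_le (hlow : r ≤ L) (hhigh : L + r ≤ n) (i : Fin n) :
    ∑ j, max (-fejerMatrix n r L i j) 0 ≤ n / r := by
  have h := Finset.sum_sub_distrib (s := Finset.univ) (fun j => max (fejerMatrix n r L i j) 0)
    (fun j => max (-fejerMatrix n r L i j) 0)
  simp only [max_zero_sub_max_neg_zero_eq_self, sum_fejerMatrix_eq_zero hlow hhigh] at h
  have := sum_max_fejerMatrix_le (r := r) (L := L) (by omega) i
  linarith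

end FejerMatrix

lemma trace_mul_one_sub_eq_trace {R m ι : Type*} [CommRing R] [Fintype m] [Fintype ι]
    [DecidableEq ι] (A Y : Matrix m ι R) (K : Matrix ι ι R) (hAK : A * K = 0) :
    (K * (1 - Y.transpose * A)).trace = K.trace := by
  rw [Matrix.mul_sub, Matrix.mul_one, Matrix.trace_sub, ← Matrix.mul_assoc,
    Matrix.trace_mul_comm, ← Matrix.mul_assoc, hAK, Matrix.zero_mul, Matrix.trace_zero, sub_zero]

noncomputable def trigMatrix (d n : ℕ) : Matrix (Fin (2 * d + 1)) (Fin n) ℝ :=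
  Matrix.of fun i j =>
    if (i : ℕ) = 0 then 1
    else if (i : ℕ) % 2 = 1 then
      Real.cos (((((i : ℕ) + 1) / 2 : ℕ) : ℝ) * (2 * Real.pi * (j : ℕ) / (n : ℕ)))
    else Real.sin ((((i : ℕ) / 2 : ℕ) : ℝ) * (2 * Real.pi * (j : ℕ) / (n : ℕ)))

lemma trigMatrix_row_eq {d n : ℕ} (k : Fin (2 * d + 1)) :
    ∃ q : ℕ, q ≤ d ∧ ((∀ x, trigMatrix d n k x = (primRoot n ^ ((q : ℤ) * x)).re) ∨
      ∀ x, trigMatrix d n k x = (primRoot n ^ ((q : ℤ) * x)).im) := by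
  have hk := k.isLt
  by_cases h0 : (k : ℕ) = 0
  · refine ⟨0, Nat.zero_le _, .inl fun x => ?_⟩
    rw [trigMatrix, Matrix.of_apply, if_pos h0]
    simp
  by_cases h1 : (k : ℕ) % 2 = 1
  · refine ⟨((k : ℕ) + 1) / 2, by omega, .inl fun x => ?_⟩
    rw [re_primRoot_zpow, trigMatrix, Matrix.of_apply, if_neg h0, if_pos h1]
    congr 1
    simp only [Int.cast_mul, Int.cast_natCast]
    ring
  · refine ⟨(k : ℕ) / 2, by omega, .inr fun x => ?_⟩
    rw [im_primRoot_zpow, trigMatrix, Matrix.of_apply, if_neg h0, if_neg h1]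
    congr 1
    simp only [Int.cast_mul, Int.cast_natCast]
    ring

lemma trigMatrix_mul_fejerMatrix {d n r L : ℕ} (hlow : d + r ≤ L) (hhigh : L + r + d ≤ n) :
    trigMatrix d n * fejerMatrix n r L = 0 := by
  ext k j
  obtain ⟨q, hq, hrow | hrow⟩ := trigMatrix_row_eq (n := n) k
  all_goals
    have h := sum_modulatedFejer_sub_mul_re_im (n := n) (r := r) (L := L) (q := q)
      (by simp only [Nat.abs_cast]; exact_mod_cast (by omega : q + r ≤ L))
      (by simp only [Nat.abs_cast]; exact_mod_cast (by omega : L + r + q ≤ n)) (j : ℕ)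
    simp only [Matrix.mul_apply, Matrix.zero_apply, fejerMatrix, Matrix.of_apply, hrow]
  · rw [← h.1]; exact Finset.sum_congr rfl fun _ _ => mul_comm _ _
  · rw [← h.2]; exact Finset.sum_congr rfl fun _ _ => mul_comm _ _

lemma one_le_of_VSG_of_mul_eq_zero {m n s : ℕ} {ξ θ ρ σ : ℝ} {N : (Fin m → ℝ) → ℝ}
    {A : Matrix (Fin m) (Fin n) ℝ} {K : Matrix (Fin n) (Fin n) ℝ} (hn : 0 < n)
    (hAK : A * K = 0) (htrace : K.trace = n) (hK : ∀ i j, |K i j| ≤ 1)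
    (hpos : ∀ i, ∑ j, max (K i j) 0 ≤ s) (hneg : ∀ i, ∑ j, max (-K i j) 0 ≤ s)
    (hθ : 1 ≤ θ) (h : VSG A Finset.univ s ξ θ ρ σ N) : 1 ≤ ξ := by
  obtain ⟨Y, v, hC₁, -, hC₃, -, -⟩ := h
  set E := 1 - Y.transpose * A
  have hcol : ∀ i, Phi Finset.univ s ξ θ (fun j => E j i) +
      Phi Finset.univ s ξ θ (fun j => -E j i) ≤ (1 + θ) * ξ :=
    fun i => by linarith [hC₁ i, hC₃ i (Finset.mem_univ i)]
  have hξ : 0 ≤ ξ := by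
    have := hcol ⟨0, hn⟩
    nlinarith [Phi_nonneg Finset.univ s ξ θ (fun j => E j ⟨0, hn⟩),
      Phi_nonneg Finset.univ s ξ θ (fun j => -E j ⟨0, hn⟩)]
  have hdiag : ∀ i, (1 + θ * ξ) * (K * E) i i ≤ (1 + θ) * ξ := fun i =>
    (mul_sum_mul_le_Phi_add_Phi (by positivity) (hK i) (hpos i) (hneg i) _).trans (hcol i)
  have hsum : (1 + θ * ξ) * (K * E).trace ≤ n * ((1 + θ) * ξ) := by
    rw [Matrix.trace, Finset.mul_sum]
    simpa using Finset.sum_le_sum fun i (_ : i ∈ Finset.univ) => hdiag i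
  rw [trace_mul_one_sub_eq_trace A Y K hAK, htrace] at hsum
  nlinarith [(Nat.cast_pos.mpr hn : (0 : ℝ) < n)]

theorem stmt14_general {d n : ℕ} (hd : 0 < d) (hn : (4 : ℝ) * Real.pi * d ≤ n)
    (A : Matrix (Fin (2 * d + 1)) (Fin n) ℝ)
    (hA : ∀ (i : Fin (2 * d + 1)) (j : Fin n),
      A i j =
        if (i : ℕ) = 0 then 1
        else if (i : ℕ) % 2 = 1 then
          Real.cos (((((i : ℕ) + 1) / 2 : ℕ) : ℝ) * (2 * Real.pi * (j : ℕ) / (n : ℕ)))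
        else Real.sin ((((i : ℕ) / 2 : ℕ) : ℝ) * (2 * Real.pi * (j : ℕ) / (n : ℕ))))
    (s : ℕ) (ξ θ ρ σ : ℝ) (hξ : ξ < 1) (hθ : 1 ≤ θ)
    (N : (Fin (2 * d + 1) → ℝ) → ℝ)
    (h : VSG A (Finset.univ : Finset (Fin n)) s ξ θ ρ σ N) :
    s ≤ 2 := by
  by_contra! hs
  have hn₁₂ : 12 * d < n := by
    have : (12 * d : ℝ) < n := by
      nlinarith [Real.pi_gt_three, (Nat.cast_pos.mpr hd : (0 : ℝ) < d)]
    exact_mod_cast this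
  set r := (n + 2) / 3
  have hbudget : (n : ℝ) / r ≤ s := by
    rw [div_le_iff₀ (by exact_mod_cast (by omega : 0 < r))]
    exact_mod_cast (show n ≤ 3 * r by omega).trans (Nat.mul_le_mul_right r hs)
  have hAK : A * fejerMatrix n r (d + r) = 0 := by
    rw [show A = trigMatrix d n from Matrix.ext hA]
    exact trigMatrix_mul_fejerMatrix le_rfl (by omega)
  have := one_le_of_VSG_of_mul_eq_zero (by omega) hAK (trace_fejerMatrix (by omega))
    abs_fejerMatrix_le_one (fun i => (sum_max_fejerMatrix_le (by omega) i).trans hbudget)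
    (fun i => (sum_max_neg_fejerMatrix_le (by omega) (by omega) i).trans hbudget) hθ h
  linarith

theorem stmt14 {d n : ℕ} (hd : 0 < d) (hn : (4 : ℝ) * Real.pi * d ≤ n)
    (A : Matrix (Fin (2 * d + 1)) (Fin n) ℝ)
    (hA : ∀ (i : Fin (2 * d + 1)) (j : Fin n),
      A i j =
        if (i : ℕ) = 0 then 1
        else if (i : ℕ) % 2 = 1 then
          Real.cos (((((i : ℕ) + 1) / 2 : ℕ) : ℝ) * (2 * Real.pi * (j : ℕ) / (n : ℕ)))
        else Real.sin ((((i : ℕ) / 2 : ℕ) : ℝ) * (2 * Real.pi * (j : ℕ) / (n : ℕ))))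
    (s : ℕ) (ξ θ ρ σ : ℝ) (hξ : ξ < 1) (hθ : 1 ≤ θ) (hρ : 0 ≤ ρ) (hσ : 0 ≤ σ)
    (N : (Fin (2 * d + 1) → ℝ) → ℝ) (hN : IsNorm N)
    (h : VSG A (Finset.univ : Finset (Fin n)) s ξ θ ρ σ N) :
    s ≤ 2 :=
  stmt14_general hd hn A hA s ξ θ ρ σ hξ hθ N h
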